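/- Let {S₁, S₂, S₃, S₄, S₅} be a complete set of Pauli classes in dimension d = 4, and let S be the unique maximal commuting Pauli class, not equal up to phase to any of S₁, S₂, S₃, all of whose members are equal up to phase to members of S₁ ∪ S₂ ∪ S₃. Then S, S₄, S₅ are pairwise disjoint and the family {S, S₄, S₅} is unextendible: there is no maximal commuting Pauli class all of whose members are non-identity two-qubit Pauli operators not equal up to phase to any member of S ∪ S₄ ∪ S₅. -/

import Mathlib

open Matrix

noncomputable section

/-- Matrices on the Hilbert space of `n` qubits, with rows and columns indexed by
bit strings `Fin n → Fin 2`. -/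
abbrev QMat (n : ℕ) := Matrix (Fin n → Fin 2) (Fin n → Fin 2) ℂ

/-- The single-qubit identity. -/
def pI : Matrix (Fin 2) (Fin 2) ℂ := 1

/-- The single-qubit Pauli X. -/
def pX : Matrix (Fin 2) (Fin 2) ℂ := !![0, 1; 1, 0]

/-- The single-qubit Pauli Y. -/
def pY : Matrix (Fin 2) (Fin 2) ℂ := !![0, -Complex.I; Complex.I, 0]

/-- The single-qubit Pauli Z. -/
def pZ : Matrix (Fin 2) (Fin 2) ℂ := !![1, 0; 0, -1]

/-- The `n`-fold Kronecker product `W 0 ⊗ ⋯ ⊗ W (n-1)`, realized on indices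
`Fin n → Fin 2`. -/
def kron (n : ℕ) (W : Fin n → Matrix (Fin 2) (Fin 2) ℂ) : QMat n :=
  fun v w => ∏ j, W j (v j) (w j)

/-- `M` is an `n`-qubit Pauli operator: an `n`-fold Kronecker product of matrices
from `{I₂, X, Y, Z}`. -/
def IsPauliOp (n : ℕ) (M : QMat n) : Prop :=
  ∃ W : Fin n → Matrix (Fin 2) (Fin 2) ℂ,
    (∀ j, W j = pI ∨ W j = pX ∨ W j = pY ∨ W j = pZ) ∧ M = kron n W

/-- Two matrices are equal up to phase if one is a nonzero scalar multiple of the other. -/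
def PhaseEq {m : Type*} (A B : Matrix m m ℂ) : Prop := ∃ c : ℂ, c ≠ 0 ∧ A = c • B

/-- A maximal commuting Pauli class in dimension `d = 2 ^ n`: a set of `d - 1`
pairwise commuting non-identity `n`-qubit Pauli operators, pairwise distinct up to phase. -/
def IsMaxClass (n : ℕ) (C : Set (QMat n)) : Prop :=
  C.Finite ∧ C.ncard = 2 ^ n - 1 ∧
  (∀ U ∈ C, IsPauliOp n U ∧ U ≠ 1) ∧
  (∀ U ∈ C, ∀ V ∈ C, U * V = V * U) ∧
  (∀ U ∈ C, ∀ V ∈ C, U ≠ V → ¬ PhaseEq U V)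

/-- Two classes are disjoint if no member of one is equal up to phase to a member of the other. -/
def ClassDisjoint {n : ℕ} (C D : Set (QMat n)) : Prop :=
  ∀ U ∈ C, ∀ V ∈ D, ¬ PhaseEq U V

/-- Two classes are equal up to phase (as sets of operators). -/
def ClassPhaseEq {n : ℕ} (C D : Set (QMat n)) : Prop :=
  (∀ U ∈ C, ∃ V ∈ D, PhaseEq U V) ∧ (∀ V ∈ D, ∃ U ∈ C, PhaseEq U V)

/-- The standard Hermitian inner product on `ι → ℂ` (conjugate-linear in the first slot). -/
def cinner {ι : Type*} [Fintype ι] (x y : ι → ℂ) : ℂ :=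
  ∑ k, (starRingEnd ℂ) (x k) * y k

/-!
Label a Pauli operator by its binary symplectic vector: two Pauli operators commute iff the
symplectic form `symp` of their labels vanishes, and they are equal up to phase iff their labels
are equal. For two qubits a maximal commuting class is thus an isotropic line of `𝔽₂⁴` (a
Lagrangian plane without `0`), and a complete set is a spread of five such lines.

A line `T ⊆ S₀ ∪ S₁ ∪ S₂` different from each `Sᵢ` meets every `Sᵢ` in one point `tᵢ`. A line `R`
avoiding `T ∪ S₃ ∪ S₄` also lies in `S₀ ∪ S₁ ∪ S₂`, so it meets `Sᵢ` in a point `xᵢ` and the nine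
points of `S₀ ∪ S₁ ∪ S₂` are `tᵢ`, `xᵢ`, `tᵢ + xᵢ`. Since `T` is its own orthogonal complement,
`symp x₀ t₁ = symp x₁ t₀ = 1`; then `S₃` contains points `p`, `q` with `p + x₀ ∈ {t₁, t₀ + t₁}` and
`q + x₁ ∈ {t₀, t₀ + t₁}`, and in each of the four cases `p + q ∈ S₂` or `symp p q = 1`.
-/

open Function

abbrev PauliLabel (n : ℕ) := Fin n → ZMod 2 × ZMod 2

/-- The label `(x, z)` stands for `Xˣ Zᶻ` up to phase. -/
def pauli1 (p : ZMod 2 × ZMod 2) : Matrix (Fin 2) (Fin 2) ℂ :=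
  match p with
  | (0, 0) => pI
  | (1, 0) => pX
  | (1, 1) => pY
  | (0, 1) => pZ

def pauliOp {n : ℕ} (v : PauliLabel n) : QMat n := kron n fun j => pauli1 (v j)

def symp1 (p q : ZMod 2 × ZMod 2) : ZMod 2 := p.1 * q.2 + p.2 * q.1

def symp {n : ℕ} (v w : PauliLabel n) : ZMod 2 := ∑ j, symp1 (v j) (w j)

theorem ZMod.eq_zero_or_eq_one (a : ZMod 2) : a = 0 ∨ a = 1 := by
  decide +revert

theorem ZMod.pair_cases (p : ZMod 2 × ZMod 2) :
    p = (0, 0) ∨ p = (1, 0) ∨ p = (1, 1) ∨ p = (0, 1) := by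
  decide +revert

theorem eq_or_eq_or_eq_add_of_ne_zero : ∀ {u w z : ZMod 2 × ZMod 2}, u ≠ 0 → w ≠ 0 → u + w ≠ 0 →
    z ≠ 0 → z = u ∨ z = w ∨ z = u + w := by
  decide

def signChar : AddChar (ZMod 2) ℂ where
  toFun a := if a = 0 then 1 else -1
  map_zero_eq_one' := rfl
  map_add_eq_mul' a b := by
    rcases a.eq_zero_or_eq_one with rfl | rfl <;> rcases b.eq_zero_or_eq_one with rfl | rfl <;>
      simp +decide

theorem signChar_apply (a : ZMod 2) : signChar a = if a = 0 then 1 else -1 := rfl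

theorem AddChar.map_finset_sum {ι A M : Type*} [AddCommMonoid A] [CommMonoid M]
    (ψ : AddChar A M) (s : Finset ι) (f : ι → A) : ψ (∑ i ∈ s, f i) = ∏ i ∈ s, ψ (f i) := by
  classical
  induction s using Finset.induction_on with
  | empty => simp
  | insert i s hi ih => rw [Finset.sum_insert hi, Finset.prod_insert hi, map_add_eq_mul, ih]

theorem PhaseEq.refl {m : Type*} (A : Matrix m m ℂ) : PhaseEq A A :=
  ⟨1, one_ne_zero, (one_smul ℂ A).symm⟩

section Kron
variable {n : ℕ}

theorem kron_mul (W W' : Fin n → Matrix (Fin 2) (Fin 2) ℂ) :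
    kron n W * kron n W' = kron n fun j => W j * W' j := by
  ext v w
  simp only [kron, Matrix.mul_apply, Fintype.prod_sum, ← Finset.prod_mul_distrib]

theorem trace_kron (W : Fin n → Matrix (Fin 2) (Fin 2) ℂ) :
    (kron n W).trace = ∏ j, (W j).trace := by
  simp only [kron, Matrix.trace, Matrix.diag, Fintype.prod_sum]

theorem kron_one : kron n (fun _ => 1) = 1 := by
  ext v w
  simp [kron, Matrix.one_apply, Fintype.prod_boole, funext_iff]

theorem kron_smul (c : Fin n → ℂ) (W : Fin n → Matrix (Fin 2) (Fin 2) ℂ) :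
    kron n (fun j => c j • W j) = (∏ j, c j) • kron n W := by
  ext v w
  simp only [kron, Matrix.smul_apply, smul_eq_mul, Finset.prod_mul_distrib]

end Kron

theorem pauli1_mul_self (p : ZMod 2 × ZMod 2) : pauli1 p * pauli1 p = 1 := by
  rcases ZMod.pair_cases p with rfl | rfl | rfl | rfl <;>
    simp [pauli1, pI, pX, pY, pZ, Matrix.one_fin_two]

theorem trace_pauli1_mul (p q : ZMod 2 × ZMod 2) :
    (pauli1 p * pauli1 q).trace = if p = q then 2 else 0 := by
  rcases ZMod.pair_cases p with rfl | rfl | rfl | rfl <;>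
    rcases ZMod.pair_cases q with rfl | rfl | rfl | rfl <;>
    simp +decide [pauli1, pI, pX, pY, pZ, Matrix.one_fin_two, Matrix.trace_fin_two,
      one_add_one_eq_two]

theorem pauli1_mul_comm (p q : ZMod 2 × ZMod 2) :
    pauli1 p * pauli1 q = signChar (symp1 p q) • (pauli1 q * pauli1 p) := by
  rcases ZMod.pair_cases p with rfl | rfl | rfl | rfl <;>
    rcases ZMod.pair_cases q with rfl | rfl | rfl | rfl <;>
    simp +decide [pauli1, symp1, signChar_apply, pI, pX, pY, pZ, Matrix.one_fin_two]

section PauliOp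
variable {n : ℕ}

theorem pauliOp_zero : pauliOp (0 : PauliLabel n) = 1 := kron_one

theorem pauliOp_mul_self (v : PauliLabel n) : pauliOp v * pauliOp v = 1 := by
  simp only [pauliOp, kron_mul, pauli1_mul_self, kron_one]

theorem trace_pauliOp_mul (v w : PauliLabel n) :
    (pauliOp v * pauliOp w).trace = if v = w then 2 ^ n else 0 := by
  simp only [pauliOp, kron_mul, trace_kron, trace_pauli1_mul, Fintype.prod_ite_zero, funext_iff]
  simp

theorem pauliOp_mul_comm (v w : PauliLabel n) :
    pauliOp v * pauliOp w = signChar (symp v w) • (pauliOp w * pauliOp v) := by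
  simp only [pauliOp, kron_mul, pauli1_mul_comm (v _), kron_smul, symp, AddChar.map_finset_sum]

theorem eq_of_phaseEq {v w : PauliLabel n} (h : PhaseEq (pauliOp v) (pauliOp w)) : v = w := by
  obtain ⟨c, hc, hvw⟩ := h
  by_contra hne
  have := trace_pauliOp_mul v w
  rw [if_neg hne, hvw, Matrix.smul_mul, Matrix.trace_smul, trace_pauliOp_mul, if_pos rfl] at this
  simp_all

theorem pauliOp_injective : Injective (pauliOp (n := n)) := fun _ _ h =>
  eq_of_phaseEq (h ▸ .refl _)

theorem symp_eq_zero_of_commute {v w : PauliLabel n}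
    (h : pauliOp v * pauliOp w = pauliOp w * pauliOp v) : symp v w = 0 := by
  by_contra hne
  have hzero : pauliOp w * pauliOp v = 0 := by
    have := pauliOp_mul_comm v w
    rw [signChar_apply, if_neg hne, h, neg_one_smul, eq_neg_iff_add_eq_zero, ← two_smul ℂ] at this
    exact (smul_eq_zero.mp this).resolve_left two_ne_zero
  have : (1 : QMat n) = 0 := by
    calc (1 : QMat n) = pauliOp w * (pauliOp v * pauliOp v) * pauliOp w := by
          rw [pauliOp_mul_self, mul_one, pauliOp_mul_self]
      _ = 0 := by rw [← mul_assoc, hzero, zero_mul, zero_mul]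
  exact one_ne_zero this

theorem IsPauliOp.exists_eq_pauliOp {M : QMat n} (h : IsPauliOp n M) :
    ∃ v : PauliLabel n, M = pauliOp v := by
  obtain ⟨W, hW, rfl⟩ := h
  have : ∀ j, ∃ p, W j = pauli1 p := fun j => by
    rcases hW j with h | h | h | h
    exacts [⟨(0, 0), h⟩, ⟨(1, 0), h⟩, ⟨(1, 1), h⟩, ⟨(0, 1), h⟩]
  choose v hv using this
  exact ⟨v, congrArg (kron n) (funext hv)⟩

end PauliOp

section Symp
variable {n : ℕ}

theorem symp_add_left (u v w : PauliLabel n) : symp (u + v) w = symp u w + symp v w := by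
  simp only [symp, symp1, Pi.add_apply, Prod.fst_add, Prod.snd_add, ← Finset.sum_add_distrib]
  congr 1; ext j; ring

theorem symp_comm (v w : PauliLabel n) : symp v w = symp w v := by
  simp only [symp, symp1]
  congr 1; ext j; ring

theorem symp_add_right (u v w : PauliLabel n) : symp u (v + w) = symp u v + symp u w := by
  rw [symp_comm, symp_add_left, symp_comm v, symp_comm w]

theorem symp_self (v : PauliLabel n) : symp v v = 0 := by
  simp only [symp, symp1, mul_comm (v _).2, CharTwo.add_self_eq_zero, Finset.sum_const_zero]

end Symp

def labels {n : ℕ} (C : Set (QMat n)) : Set (PauliLabel n) := pauliOp ⁻¹' C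

namespace IsMaxClass
variable {n : ℕ} {C D : Set (QMat n)}

theorem image_labels (hC : IsMaxClass n C) : pauliOp '' labels C = C :=
  Set.image_preimage_eq_of_subset fun U hU =>
    let ⟨v, hv⟩ := (hC.2.2.1 U hU).1.exists_eq_pauliOp; ⟨v, hv.symm⟩

theorem ncard_labels (hC : IsMaxClass n C) : (labels C).ncard = 2 ^ n - 1 := by
  rw [← hC.2.1, ← Set.ncard_image_of_injective _ pauliOp_injective, hC.image_labels]

theorem symp_eq_zero (hC : IsMaxClass n C) {v w : PauliLabel n} (hv : v ∈ labels C)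
    (hw : w ∈ labels C) : symp v w = 0 :=
  symp_eq_zero_of_commute (hC.2.2.2.1 _ hv _ hw)

theorem eq_of_labels_eq (hC : IsMaxClass n C) (hD : IsMaxClass n D) (h : labels C = labels D) :
    C = D := by
  rw [← hC.image_labels, h, hD.image_labels]

theorem classDisjoint_iff (hC : IsMaxClass n C) (hD : IsMaxClass n D) :
    ClassDisjoint C D ↔ Disjoint (labels C) (labels D) := by
  refine ⟨fun h => Set.disjoint_left.mpr fun v hC hD => h _ hC _ hD (.refl _), fun h => ?_⟩
  rw [← hC.image_labels, ← hD.image_labels]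
  rintro _ ⟨v, hv, rfl⟩ _ ⟨w, hw, rfl⟩ hvw
  exact Set.disjoint_left.mp h hv (eq_of_phaseEq hvw ▸ hw)

end IsMaxClass

theorem labels_subset_of_forall_phaseEq {n : ℕ} {C D : Set (QMat n)} (hD : ∀ V ∈ D, IsPauliOp n V)
    (h : ∀ U ∈ C, ∃ V ∈ D, PhaseEq U V) : labels C ⊆ labels D := by
  intro v hv
  obtain ⟨V, hV, hvV⟩ := h _ hv
  obtain ⟨w, rfl⟩ := (hD V hV).exists_eq_pauliOp
  rwa [labels, Set.mem_preimage, eq_of_phaseEq hvV]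

set_option synthInstance.maxSize 256 in
theorem eq_zero_or_eq_of_symp_eq_zero : ∀ {t₀ t₁ x : PauliLabel 2}, t₀ ≠ 0 → t₁ ≠ 0 → t₀ ≠ t₁ →
    symp t₀ t₁ = 0 → symp x t₀ = 0 → symp x t₁ = 0 → x = 0 ∨ x = t₀ ∨ x = t₁ ∨ x = t₀ + t₁ := by
  decide

/-- The nonzero vectors of a Lagrangian plane of `𝔽₂⁴`. -/
structure IsIsotropicLine (L : Set (PauliLabel 2)) : Prop where
  ncard_eq : L.ncard = 3
  zero_notMem : 0 ∉ L
  symp_eq_zero : ∀ v ∈ L, ∀ w ∈ L, symp v w = 0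

theorem IsMaxClass.isIsotropicLine {C : Set (QMat 2)} (hC : IsMaxClass 2 C) :
    IsIsotropicLine (labels C) where
  ncard_eq := hC.ncard_labels
  zero_notMem h := (hC.2.2.1 _ h).2 pauliOp_zero
  symp_eq_zero _ hv _ hw := hC.symp_eq_zero hv hw

namespace IsIsotropicLine
variable {T L M A B C R : Set (PauliLabel 2)} {p q x t₀ t₁ x₀ x₁ : PauliLabel 2}

theorem ne_zero (hL : IsIsotropicLine L) (hp : p ∈ L) : p ≠ 0 :=
  fun h => hL.zero_notMem (h ▸ hp)

theorem exists_mem_ne (hL : IsIsotropicLine L) (p q : PauliLabel 2) :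
    ∃ r ∈ L, r ≠ p ∧ r ≠ q := by
  have : ({p, q} : Set (PauliLabel 2)).ncard < L.ncard :=
    (Set.ncard_insert_le p {q}).trans_lt (by rw [Set.ncard_singleton, hL.ncard_eq]; norm_num)
  obtain ⟨r, hrL, hr⟩ := Set.exists_mem_notMem_of_ncard_lt_ncard this
  exact ⟨r, hrL, fun h => hr (.inl h), fun h => hr (.inr h)⟩

theorem eq_of_symp_eq_zero (hL : IsIsotropicLine L) (hp : p ∈ L) (hq : q ∈ L) (hpq : p ≠ q)
    (hxp : symp x p = 0) (hxq : symp x q = 0) : x = 0 ∨ x = p ∨ x = q ∨ x = p + q :=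
  eq_zero_or_eq_of_symp_eq_zero (hL.ne_zero hp) (hL.ne_zero hq) hpq (hL.symp_eq_zero p hp q hq)
    hxp hxq

theorem add_mem (hL : IsIsotropicLine L) (hp : p ∈ L) (hq : q ∈ L) (hpq : p ≠ q) : p + q ∈ L := by
  obtain ⟨r, hr, hrp, hrq⟩ := hL.exists_mem_ne p q
  rcases hL.eq_of_symp_eq_zero hp hq hpq (hL.symp_eq_zero r hr p hp) (hL.symp_eq_zero r hr q hq)
    with h | h | h | h
  exacts [absurd h (hL.ne_zero hr), absurd h hrp, absurd h hrq, h ▸ hr]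

theorem mem_iff (hL : IsIsotropicLine L) (hp : p ∈ L) (hq : q ∈ L) (hpq : p ≠ q) :
    x ∈ L ↔ x = p ∨ x = q ∨ x = p + q := by
  refine ⟨fun hx => ?_, ?_⟩
  · exact (hL.eq_of_symp_eq_zero hp hq hpq (hL.symp_eq_zero x hx p hp)
      (hL.symp_eq_zero x hx q hq)).resolve_left (hL.ne_zero hx)
  · rintro (rfl | rfl | rfl)
    exacts [hp, hq, hL.add_mem hp hq hpq]

theorem eq_zero_or_mem_of_symp_eq_zero (hL : IsIsotropicLine L) (hp : p ∈ L) (hq : q ∈ L)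
    (hpq : p ≠ q) (hxp : symp x p = 0) (hxq : symp x q = 0) : x = 0 ∨ x ∈ L :=
  (hL.eq_of_symp_eq_zero hp hq hpq hxp hxq).imp_right (hL.mem_iff hp hq hpq).mpr

theorem eq_of_mem_of_mem (hL : IsIsotropicLine L) (hM : IsIsotropicLine M) (hp : p ∈ L ∩ M)
    (hq : q ∈ L ∩ M) (hpq : p ≠ q) : L = M :=
  Set.ext fun _ => (hL.mem_iff hp.1 hq.1 hpq).trans (hM.mem_iff hp.2 hq.2 hpq).symm

theorem ncard_inter_le_one (hL : IsIsotropicLine L) (hA : IsIsotropicLine A) (hLA : L ≠ A) :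
    (L ∩ A).ncard ≤ 1 :=
  (Set.ncard_le_one (Set.toFinite _)).mpr fun _ hp _ hq =>
    by_contra fun hpq => hLA (hL.eq_of_mem_of_mem hA hp hq hpq)

theorem inter_nonempty (hL : IsIsotropicLine L) (hA : IsIsotropicLine A) (hB : IsIsotropicLine B)
    (hsub : L ⊆ A ∪ B ∪ C) (hLA : L ≠ A) (hLB : L ≠ B) : (L ∩ C).Nonempty := by
  by_contra hLC
  have hsub' : L ⊆ (L ∩ A) ∪ (L ∩ B) := fun v hv => by
    rcases hsub hv with (h | h) | h
    exacts [.inl ⟨hv, h⟩, .inr ⟨hv, h⟩, absurd ⟨v, hv, h⟩ hLC]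
  have := (Set.ncard_le_ncard hsub').trans (Set.ncard_union_le _ _)
  have := hL.ncard_inter_le_one hA hLA
  have := hL.ncard_inter_le_one hB hLB
  have := hL.ncard_eq
  omega

theorem exists_mem_inter_add_mem (hL : IsIsotropicLine L) (hA : IsIsotropicLine A)
    (hB : IsIsotropicLine B) (hC : IsIsotropicLine C) (hAB : Disjoint A B)
    (hsub : L ⊆ A ∪ B ∪ C) (hLA : L ≠ A) (hLB : L ≠ B) (hLC : L ≠ C) :
    ∃ a ∈ L ∩ A, ∃ b ∈ L ∩ B, a + b ∈ L ∩ C := by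
  obtain ⟨a, ha⟩ := hL.inter_nonempty (C := A) hB hC
    (hsub.trans_eq (by rw [Set.union_assoc, Set.union_comm])) hLB hLC
  obtain ⟨b, hb⟩ := hL.inter_nonempty (C := B) hA hC
    (hsub.trans_eq (Set.union_right_comm _ _ _)) hLA hLC
  have hab : a ≠ b := fun h => Set.disjoint_left.mp hAB ha.2 (h ▸ hb.2)
  have habL := hL.add_mem ha.1 hb.1 hab
  refine ⟨a, ha, b, hb, habL, ?_⟩
  rcases hsub habL with (h | h) | h
  · exact absurd (hL.eq_of_mem_of_mem hA ha ⟨habL, h⟩ fun h' =>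
      hL.ne_zero hb.1 (left_eq_add.mp h')) hLA
  · exact absurd (hL.eq_of_mem_of_mem hB hb ⟨habL, h⟩ fun h' =>
      hL.ne_zero ha.1 (right_eq_add.mp h')) hLB
  · exact h

theorem symp_eq_one_of_mem_inter (hT : IsIsotropicLine T) (hR : IsIsotropicLine R)
    (hA : IsIsotropicLine A) (hTR : Disjoint T R) (ht₀ : t₀ ∈ T ∩ A) (ht₁ : t₁ ∈ T)
    (ht : t₀ ≠ t₁) (hx : x ∈ R ∩ A) : symp x t₁ = 1 :=
  (symp x t₁).eq_zero_or_eq_one.resolve_left fun h₁ =>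
    (hT.eq_zero_or_mem_of_symp_eq_zero ht₀.1 ht₁ ht (hA.symp_eq_zero x hx.2 t₀ ht₀.2) h₁).elim
      (hR.ne_zero hx.1) fun hxT => Set.disjoint_left.mp hTR hxT hx.1

theorem exists_mem_symp_eq (hT : IsIsotropicLine T) (ht₀ : t₀ ∈ T) (ht₁ : t₁ ∈ T) (ht : t₀ ≠ t₁)
    (hL : IsIsotropicLine L) (hLT : Disjoint L T) {a b : ZMod 2} (hab : (a, b) ≠ 0) :
    ∃ p ∈ L, symp p t₀ = a ∧ symp p t₁ = b := by
  -- `π` is additive and vanishes nowhere on `L`, so it maps `L` onto `𝔽₂² \ {0}`.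
  let π (v : PauliLabel 2) : ZMod 2 × ZMod 2 := (symp v t₀, symp v t₁)
  have hπ : ∀ v ∈ L, π v ≠ 0 := fun v hv h =>
    (hT.eq_zero_or_mem_of_symp_eq_zero ht₀ ht₁ ht (congrArg Prod.fst h) (congrArg Prod.snd h)).elim
      (hL.ne_zero hv) (Set.disjoint_left.mp hLT hv)
  obtain ⟨u, hu, -⟩ := hL.exists_mem_ne 0 0
  obtain ⟨w, hw, hwu, -⟩ := hL.exists_mem_ne u u
  have hπuw : π (u + w) = π u + π w := by simp only [π, symp_add_left, Prod.mk_add_mk]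
  rcases eq_or_eq_or_eq_add_of_ne_zero (hπ u hu) (hπ w hw) (hπuw ▸ hπ _ (hL.add_mem hu hw hwu.symm))
    hab with h | h | h
  · exact ⟨u, hu, Prod.ext_iff.mp h.symm⟩
  · exact ⟨w, hw, Prod.ext_iff.mp h.symm⟩
  · exact ⟨u + w, hL.add_mem hu hw hwu.symm, Prod.ext_iff.mp (hπuw.trans h.symm)⟩

theorem exists_mem_add_eq (hT : IsIsotropicLine T) (ht₀ : t₀ ∈ T) (ht₁ : t₁ ∈ T) (ht : t₀ ≠ t₁)
    (hA : IsIsotropicLine A) (ht₀A : t₀ ∈ A) (hxA : x ∈ A) (hxt : x ≠ t₀) (hx : symp x t₁ = 1)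
    (hL : IsIsotropicLine L) (hLT : Disjoint L T) (hLA : Disjoint L A) :
    ∃ p ∈ L, symp p t₀ = 0 ∧ symp p t₁ = 1 ∧ (p + x = t₁ ∨ p + x = t₀ + t₁) := by
  obtain ⟨p, hpL, hp₀, hp₁⟩ := hT.exists_mem_symp_eq ht₀ ht₁ ht hL hLT (a := 0) (b := 1) (by simp)
  have hpA : p ∉ A := Set.disjoint_left.mp hLA hpL
  refine ⟨p, hpL, hp₀, hp₁, ?_⟩
  rcases hT.eq_of_symp_eq_zero (x := p + x) ht₀ ht₁ ht
      (by rw [symp_add_left, hp₀, hA.symp_eq_zero x hxA t₀ ht₀A, add_zero])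
      (by rw [symp_add_left, hp₁, hx, CharTwo.add_self_eq_zero]) with h | h | h | h
  · exact absurd (by rwa [CharTwo.add_eq_zero.mp h]) hpA
  · exact absurd (by rw [CharTwo.add_eq_iff_eq_add.mp h]; exact hA.add_mem ht₀A hxA hxt.symm) hpA
  · exact .inl h
  · exact .inr h

theorem not_disjoint_union_of_transversals (hT : IsIsotropicLine T) (hR : IsIsotropicLine R)
    (hA : IsIsotropicLine A) (hB : IsIsotropicLine B) (hC : IsIsotropicLine C)
    (hL : IsIsotropicLine L) (hTR : Disjoint T R)
    (ht₀ : t₀ ∈ T ∩ A) (ht₁ : t₁ ∈ T ∩ B) (ht : t₀ + t₁ ∈ C)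
    (hx₀ : x₀ ∈ R ∩ A) (hx₁ : x₁ ∈ R ∩ B) (hx : x₀ + x₁ ∈ C) : ¬ Disjoint L (A ∪ B ∪ C) := by
  intro hLABC
  have ht₀₁ : t₀ ≠ t₁ := fun h => hC.ne_zero ht (by rw [h, CharTwo.add_self_eq_zero])
  have hx₀₁ : x₀ ≠ x₁ := fun h => hC.ne_zero hx (by rw [h, CharTwo.add_self_eq_zero])
  have hxT {x} (hx : x ∈ R) : x ∉ T := fun hxT => Set.disjoint_left.mp hTR hxT hx
  have hLT : Disjoint L T := Set.disjoint_left.mpr fun v hvL hvT =>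
    Set.disjoint_left.mp hLABC hvL <| by
      rcases (hT.mem_iff ht₀.1 ht₁.1 ht₀₁).mp hvT with rfl | rfl | rfl
      exacts [.inl (.inl ht₀.2), .inl (.inr ht₁.2), .inr ht]
  have hx₀t₀ := hA.symp_eq_zero _ hx₀.2 _ ht₀.2
  have hx₀t₁ := hT.symp_eq_one_of_mem_inter hR hA hTR ht₀ ht₁.1 ht₀₁ hx₀
  have hx₁t₀ := hT.symp_eq_one_of_mem_inter hR hB hTR ht₁ ht₀.1 ht₀₁.symm hx₁
  obtain ⟨p, hpL, hp₀, -, hp⟩ := hT.exists_mem_add_eq ht₀.1 ht₁.1 ht₀₁ hA ht₀.2 hx₀.2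
    (fun h => hxT hx₀.1 (h ▸ ht₀.1)) hx₀t₁ hL hLT (hLABC.mono_right (by intro; simp_all))
  obtain ⟨q, hqL, -, hq₀, hq⟩ := hT.exists_mem_add_eq ht₁.1 ht₀.1 ht₀₁.symm hB ht₁.2 hx₁.2
    (fun h => hxT hx₁.1 (h ▸ ht₁.1)) hx₁t₀ hL hLT (hLABC.mono_right (by intro; simp_all))
  have hpq : p ≠ q := by rintro rfl; exact zero_ne_one (hp₀.symm.trans hq₀)
  have hpqC : p + q ∉ C := fun h =>
    Set.disjoint_left.mp hLABC (hL.add_mem hpL hqL hpq) (.inr h)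
  have hpq₀ : symp p q = 0 := hL.symp_eq_zero p hpL q hqL
  rcases hp with hp | hp <;> rcases hq with hq | hq <;>
    obtain rfl := CharTwo.add_eq_iff_eq_add.mp hp <;> obtain rfl := CharTwo.add_eq_iff_eq_add.mp hq
  · apply hpqC
    rw [show t₁ + x₀ + (t₀ + x₁) = t₀ + t₁ + (x₀ + x₁) by abel]
    exact hC.add_mem ht hx fun h =>
      hxT (hR.add_mem hx₀.1 hx₁.1 hx₀₁) (h ▸ hT.add_mem ht₀.1 ht₁.1 ht₀₁)
  · simp only [symp_add_left, symp_add_right, symp_self, hT.symp_eq_zero _ ht₁.1 _ ht₀.1,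
      hB.symp_eq_zero _ ht₁.2 _ hx₁.2, hx₀t₀, hx₀t₁, hR.symp_eq_zero _ hx₀.1 _ hx₁.1] at hpq₀
    simp at hpq₀
  · simp only [symp_add_left, symp_add_right, symp_self, hT.symp_eq_zero _ ht₁.1 _ ht₀.1,
      symp_comm t₀ x₁, hx₁t₀, hB.symp_eq_zero _ ht₁.2 _ hx₁.2, hx₀t₀,
      hR.symp_eq_zero _ hx₀.1 _ hx₁.1] at hpq₀
    simp at hpq₀
  · apply hpqC
    rw [show t₀ + t₁ + x₀ + (t₁ + t₀ + x₁) = (t₀ + t₀) + (t₁ + t₁) + (x₀ + x₁) by abel,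
      CharTwo.add_self_eq_zero, CharTwo.add_self_eq_zero, zero_add, zero_add]
    exact hx

end IsIsotropicLine

theorem iUnion_eq_compl_zero {S : Fin 5 → Set (PauliLabel 2)} (hS : ∀ i, IsIsotropicLine (S i))
    (hdisj : Pairwise (Disjoint on S)) : ⋃ i, S i = {0}ᶜ := by
  have hcard : ({0}ᶜ : Set (PauliLabel 2)).encard = (⋃ i, S i).encard := by
    rw [Set.encard_iUnion_of_finite hdisj, finsum_eq_sum_of_fintype]
    simp only [← Set.coe_ncard_eq_encard, (hS _).ncard_eq, Set.ncard_eq_toFinset_card',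
      Set.toFinset_compl, Finset.card_compl]
    rfl
  exact (Set.toFinite _).eq_of_subset_of_encard_le
    (Set.iUnion_subset fun i _ hv => (hS i).ne_zero hv) hcard.le

theorem IsIsotropicLine.not_disjoint_of_spread {R T : Set (PauliLabel 2)}
    {S : Fin 5 → Set (PauliLabel 2)} (hR : IsIsotropicLine R) (hS : ∀ i, IsIsotropicLine (S i))
    (hdisj : Pairwise (Disjoint on S)) (hT : IsIsotropicLine T) (hTS : T ⊆ S 0 ∪ S 1 ∪ S 2)
    (hTne : ∀ i : Fin 5, i.val < 3 → T ≠ S i) : ¬ Disjoint R (T ∪ S 3 ∪ S 4) := by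
  intro hRd
  have hRS : R ⊆ S 0 ∪ S 1 ∪ S 2 := fun v hv => by
    obtain ⟨i, hi⟩ := Set.mem_iUnion.mp
      (((iUnion_eq_compl_zero hS hdisj).symm ▸ hR.ne_zero hv : v ∈ ⋃ i, S i))
    have hvS := Set.disjoint_left.mp hRd hv
    fin_cases i
    exacts [.inl (.inl hi), .inl (.inr hi), .inr hi, absurd (.inl (.inr hi)) hvS,
      absurd (.inr hi) hvS]
  have hRT : Disjoint R T := hRd.mono_right (Set.subset_union_left.trans Set.subset_union_left)
  have hRne {i t} (ht : t ∈ T ∩ S i) : R ≠ S i := fun h =>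
    Set.disjoint_left.mp hRT (h ▸ ht.2) ht.1
  obtain ⟨t₀, ht₀, t₁, ht₁, ht⟩ := hT.exists_mem_inter_add_mem (hS 0) (hS 1) (hS 2)
    (hdisj (by decide)) hTS (hTne 0 (by decide)) (hTne 1 (by decide)) (hTne 2 (by decide))
  obtain ⟨x₀, hx₀, x₁, hx₁, hx⟩ := hR.exists_mem_inter_add_mem (hS 0) (hS 1) (hS 2)
    (hdisj (by decide)) hRS (hRne ht₀) (hRne ht₁) (hRne ht)
  exact hT.not_disjoint_union_of_transversals hR (hS 0) (hS 1) (hS 2) (hS 3) hRT.symm ht₀ ht₁ ht.2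
    hx₀ hx₁ hx.2 <| Set.disjoint_union_right.mpr
      ⟨Set.disjoint_union_right.mpr ⟨hdisj (by decide), hdisj (by decide)⟩, hdisj (by decide)⟩

/-- With `{S 0, …, S 4}` a complete set of Pauli classes in `d = 4` and `T`
the unique maximal commuting Pauli class (not equal up to phase to any of `S 0, S 1, S 2`)
whose members are, up to phase, members of `S 0 ∪ S 1 ∪ S 2`, the classes `T`, `S 3`, `S 4`
are pairwise disjoint and the family `{T, S 3, S 4}` is unextendible. -/
theorem unext_three_classes_d4 (S : Fin 5 → Set (QMat 2)) (T : Set (QMat 2))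
    (hmax : ∀ i, IsMaxClass 2 (S i))
    (hdisj : ∀ i j, i ≠ j → ClassDisjoint (S i) (S j))
    (hT : IsMaxClass 2 T)
    (hTsub : ∀ U ∈ T, ∃ V ∈ S 0 ∪ S 1 ∪ S 2, PhaseEq U V)
    (hTne : ∀ i : Fin 5, i.val < 3 → ¬ ClassPhaseEq T (S i)) :
    (ClassDisjoint T (S 3) ∧ ClassDisjoint T (S 4) ∧ ClassDisjoint (S 3) (S 4)) ∧
    ¬ ∃ R : Set (QMat 2), IsMaxClass 2 R ∧
        ∀ U ∈ R, ∀ V ∈ T ∪ S 3 ∪ S 4, ¬ PhaseEq U V := by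
  have hdisj' : Pairwise (Disjoint on fun i => labels (S i)) := fun i j hij =>
    ((hmax i).classDisjoint_iff (hmax j)).mp (hdisj i j hij)
  have hTS : labels T ⊆ labels (S 0) ∪ labels (S 1) ∪ labels (S 2) :=
    labels_subset_of_forall_phaseEq
      (by rintro V ((hV | hV) | hV) <;> exact ((hmax _).2.2.1 V hV).1) hTsub
  have hTne' (i : Fin 5) (hi : i.val < 3) : labels T ≠ labels (S i) := fun h =>
    hTne i hi (hT.eq_of_labels_eq (hmax i) h ▸
      ⟨fun U hU => ⟨U, hU, .refl U⟩, fun V hV => ⟨V, hV, .refl V⟩⟩)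
  have hTdisj (i : Fin 5) (h₀ : i ≠ 0) (h₁ : i ≠ 1) (h₂ : i ≠ 2) :
      Disjoint (labels T) (labels (S i)) :=
    Disjoint.mono_left hTS <| Set.disjoint_union_left.mpr
      ⟨Set.disjoint_union_left.mpr ⟨hdisj' h₀.symm, hdisj' h₁.symm⟩, hdisj' h₂.symm⟩
  refine ⟨⟨(hT.classDisjoint_iff (hmax 3)).mpr (hTdisj 3 (by decide) (by decide) (by decide)),
    (hT.classDisjoint_iff (hmax 4)).mpr (hTdisj 4 (by decide) (by decide) (by decide)),
    hdisj 3 4 (by decide)⟩, ?_⟩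
  rintro ⟨R, hR, hRavoid⟩
  exact hR.isIsotropicLine.not_disjoint_of_spread (fun i => (hmax i).isIsotropicLine) hdisj'
    hT.isIsotropicLine hTS hTne' <|
      Set.disjoint_left.mpr fun v hvR hv => hRavoid _ hvR _ hv (.refl _)
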